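/- arXiv:2206.10685 — 3 statements merged into one kernel-verified Lean document; each statement's English description precedes it below -/
import Mathlib

section
/- Sensitivity of a single mutual-information summand (Case p > p', gap 1/n): Let n ≥ 6, let p and m be reals with 2/n ≤ p ≤ m ≤ 1. Then |−(1/n)·log₂ m + p·log₂ p − (p − 1/n)·log₂(p − 1/n)| ≤ (log₂ n)/n + 2/n. -/
/-!
Write `q = p - ε`. The quantity splits as `q · log₂ (p / q) + ε · (log₂ p - log₂ m)`.
By `log x ≤ x - 1` the first term lies in `[0, (p - q) / ln 2] ⊆ [0, 2ε]`; the second lies in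
`[ε · log₂ ε, 0]` because `ε < p ≤ m ≤ 1`. The triangle inequality finishes, with `ε = 1/n`.
-/

open Real

lemma mul_log_div_le_sub {p q : ℝ} (hp : 0 < p) (hq : 0 < q) : q * log (p / q) ≤ p - q := by
  have h := mul_le_mul_of_nonneg_left (log_le_sub_one_of_pos (div_pos hp hq)) hq.le
  rwa [mul_sub, mul_div_cancel₀ _ hq.ne', mul_one] at h

lemma mul_logb_two_div_le {p q : ℝ} (hq : 0 < q) (hqp : q ≤ p) :
    q * logb 2 (p / q) ≤ 2 * (p - q) := by
  have hlog2 : 1 / 2 ≤ log 2 := by linarith [log_two_gt_d9]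
  rw [logb, mul_div_assoc', div_le_iff₀ (by positivity)]
  calc q * log (p / q) ≤ p - q := mul_log_div_le_sub (hq.trans_le hqp) hq
    _ = 2 * (p - q) * (1 / 2) := by ring
    _ ≤ 2 * (p - q) * log 2 := by gcongr

theorem abs_entropy_shift_le {ε p m : ℝ} (hε : 0 < ε) (hεp : ε < p) (hpm : p ≤ m) (hm : m ≤ 1) :
    |-ε * logb 2 m + p * logb 2 p - (p - ε) * logb 2 (p - ε)|
      ≤ ε * logb 2 ε⁻¹ + 2 * ε := by
  set q := p - ε with hq_def
  have hq : 0 < q := sub_pos.mpr hεp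
  have hp : 0 < p := hε.trans hεp
  have hqp : q ≤ p := by linarith
  have hsplit : -ε * logb 2 m + p * logb 2 p - q * logb 2 q
      = q * logb 2 (p / q) + ε * (logb 2 p - logb 2 m) := by
    rw [logb_div hp.ne' hq.ne', hq_def]; ring
  have hshift_nonneg : 0 ≤ q * logb 2 (p / q) :=
    mul_nonneg hq.le (logb_nonneg one_lt_two ((one_le_div hq).mpr hqp))
  have hshift_le : q * logb 2 (p / q) ≤ 2 * ε := by
    simpa [hq_def] using mul_logb_two_div_le hq hqp
  have hmarg_nonpos : ε * (logb 2 p - logb 2 m) ≤ 0 :=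
    mul_nonpos_of_nonneg_of_nonpos hε.le
      (sub_nonpos.mpr (logb_le_logb_of_le one_lt_two hp hpm))
  have hmarg_ge : -(ε * logb 2 ε⁻¹) ≤ ε * (logb 2 p - logb 2 m) := by
    rw [logb_inv, mul_neg, neg_neg]
    gcongr
    linarith [logb_le_logb_of_le one_lt_two hε hεp.le,
      logb_nonpos (b := 2) one_lt_two (hp.trans_le hpm).le hm]
  rw [hsplit, abs_le]
  constructor <;> linarith

theorem stmt_10 (n : ℕ) (hn : 6 ≤ n) (p m : ℝ)
    (hp : 2 / n ≤ p) (hpm : p ≤ m) (hm : m ≤ 1) :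
    |-(1 / n) * Real.logb 2 m + p * Real.logb 2 p
      - (p - 1 / n) * Real.logb 2 (p - 1 / n)| ≤ Real.logb 2 n / n + 2 / n := by
  have hn_pos : (0 : ℝ) < n := by exact_mod_cast (by omega : 0 < n)
  have hεp : 1 / (n : ℝ) < p :=
    (div_lt_div_of_pos_right one_lt_two hn_pos).trans_le hp
  calc _ ≤ 1 / n * logb 2 (1 / n : ℝ)⁻¹ + 2 * (1 / n) :=
        abs_entropy_shift_le (by positivity) hεp hpm hm
    _ = logb 2 n / n + 2 / n := by rw [one_div, inv_inv]; ring
end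

section
/- Sensitivity of a single mutual-information summand (Case p' > p, gap 1/n): Let n ≥ 6, let p and m be reals with 1/n ≤ p, p + 1/n ≤ m ≤ 1. Then |(1/n)·log₂ m + p·log₂ p − (p + 1/n)·log₂(p + 1/n)| ≤ (log₂ n)/n + 3/n. -/
/-! The summand equals `ε (log₂ m - log₂ (p + ε)) - p (log₂ (p + ε) - log₂ p)` with `ε = 1/n`.
Since `ε ≤ p + ε ≤ m ≤ 1`, the first term lies in `[0, ε log₂ (1/ε)]`; by `log x ≤ x - 1` at
`x = (p + ε) / p`, the second lies in `[0, ε / log 2]`, and `1 / log 2 < 3`. -/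

open Real

lemma mul_logb_add_sub_logb_le {p ε : ℝ} (hp : 0 < p) (hε : 0 < ε) :
    p * (logb 2 (p + ε) - logb 2 p) ≤ ε / log 2 := by
  have hlog : log (p + ε) - log p ≤ ε / p := by
    have h := log_le_sub_one_of_pos (div_pos (add_pos hp hε) hp)
    rwa [log_div (add_pos hp hε).ne' hp.ne', add_div, div_self hp.ne', add_sub_cancel_left] at h
  calc p * (logb 2 (p + ε) - logb 2 p)
      = p * ((log (p + ε) - log p) / log 2) := by rw [logb, logb, sub_div]
    _ ≤ p * ((ε / p) / log 2) := by gcongr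
    _ = ε / log 2 := by field_simp

lemma logb_sub_logb_le_neg_logb {ε x m : ℝ} (hε : 0 < ε) (hεx : ε ≤ x) (hxm : x ≤ m)
    (hm : m ≤ 1) : logb 2 m - logb 2 x ≤ -logb 2 ε := by
  have hm0 : logb 2 m ≤ 0 := logb_nonpos one_lt_two (hε.le.trans (hεx.trans hxm)) hm
  have hεx' : logb 2 ε ≤ logb 2 x := logb_le_logb_of_le one_lt_two hε hεx
  linarith

lemma abs_mul_logb_add_mul_logb_sub_le {ε p m : ℝ} (hε : 0 < ε) (hp : 0 < p)
    (hpm : p + ε ≤ m) (hm : m ≤ 1) :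
    |ε * logb 2 m + p * logb 2 p - (p + ε) * logb 2 (p + ε)|
      ≤ ε * logb 2 ε⁻¹ + ε / log 2 := by
  have hgap := mul_logb_add_sub_logb_le hp hε
  have hmono : 0 ≤ logb 2 (p + ε) - logb 2 p :=
    sub_nonneg.mpr (logb_le_logb_of_le one_lt_two hp (by linarith))
  have hspread : logb 2 m - logb 2 (p + ε) ≤ logb 2 ε⁻¹ := by
    rw [logb_inv]; exact logb_sub_logb_le_neg_logb hε (by linarith) hpm hm
  have hspread0 : 0 ≤ logb 2 m - logb 2 (p + ε) :=
    sub_nonneg.mpr (logb_le_logb_of_le one_lt_two (by linarith) hpm)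
  have hinv : 0 ≤ logb 2 ε⁻¹ := logb_nonneg one_lt_two (one_le_inv₀ hε |>.mpr (by linarith))
  have hsplit : ε * logb 2 m + p * logb 2 p - (p + ε) * logb 2 (p + ε)
      = ε * (logb 2 m - logb 2 (p + ε)) - p * (logb 2 (p + ε) - logb 2 p) := by ring
  rw [hsplit, abs_le]
  constructor
  · nlinarith [mul_nonneg hε.le hspread0, mul_nonneg hε.le hinv]
  · nlinarith [mul_nonneg hp.le hmono, mul_le_mul_of_nonneg_left hspread hε.le,
      div_nonneg hε.le (log_pos one_lt_two).le]

theorem stmt_11 (n : ℕ) (hn : 6 ≤ n) (p m : ℝ)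
    (hp : 1 / n ≤ p) (hpm : p + 1 / n ≤ m) (hm : m ≤ 1) :
    |(1 / n) * Real.logb 2 m + p * Real.logb 2 p
      - (p + 1 / n) * Real.logb 2 (p + 1 / n)| ≤ Real.logb 2 n / n + 3 / n := by
  have hn0 : (0 : ℝ) < n := by exact_mod_cast (by omega : 0 < n)
  have hε : (0 : ℝ) < 1 / n := by positivity
  have hbound := abs_mul_logb_add_mul_logb_sub_le hε (hε.trans_le hp) hpm hm
  have hlog2 : 1 / n / log 2 ≤ 3 / n := by
    rw [div_div, div_le_div_iff₀ (by have := log_pos one_lt_two; positivity) hn0]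
    nlinarith [log_two_gt_d9]
  rw [one_div, inv_inv, ← one_div] at hbound
  calc _ ≤ 1 / n * logb 2 n + 1 / n / log 2 := hbound
    _ ≤ logb 2 n / n + 3 / n := by rw [one_div_mul_eq_div]; linarith
end

section
/- Sensitivity of a single mutual-information summand (Case p > p', gap 2/n): Let n ≥ 6, let p and m be reals with 3/n ≤ p ≤ m ≤ 1. Then |−(2/n)·log₂ m + p·log₂ p − (p − 2/n)·log₂(p − 2/n)| ≤ (2·log₂ n)/n + 4.8/n. -/
/-!
Write `c = 2/n`. Since `p log p - (p - c) log (p - c) = c log p + (p - c) log (p / (p - c))`, the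
quantity splits as `c (log₂ p - log₂ m) + (p - c) log₂ (p / (p - c))`. As `1/n ≤ p ≤ m ≤ 1`, the
first term lies in `[-c log₂ n, 0]`, and `log x ≤ x - 1` puts the second in `[0, c / log 2]`;
finally `2 / log 2 < 4.8`.
-/

open Real

lemma Real.mul_log_div_le_sub {x y : ℝ} (hx : 0 < x) (hy : 0 < y) :
    x * log (y / x) ≤ y - x :=
  calc x * log (y / x) ≤ x * (y / x - 1) :=
        mul_le_mul_of_nonneg_left (log_le_sub_one_of_pos (div_pos hy hx)) hx.le
    _ = y - x := by field_simp

lemma Real.abs_mul_logb_sub_logb_le {b x y : ℝ} (hb : 1 < b) (hx : 0 < x) (hxy : x ≤ y) :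
    |x * (logb b y - logb b x)| ≤ (y - x) / log b := by
  have hy : 0 < y := hx.trans_le hxy
  have hlogb : 0 < log b := log_pos hb
  have hsub : logb b y - logb b x = log (y / x) / log b := by
    rw [log_div hy.ne' hx.ne', logb, logb, sub_div]
  rw [hsub, mul_div_assoc', abs_of_nonneg
    (div_nonneg (mul_nonneg hx.le (log_nonneg ((one_le_div hx).2 hxy))) hlogb.le)]
  exact div_le_div_of_nonneg_right (mul_log_div_le_sub hx hy) hlogb.le

lemma Real.abs_logb_sub_logb_le_logb_inv {b a p m : ℝ} (hb : 1 < b) (ha : 0 < a) (hap : a ≤ p)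
    (hpm : p ≤ m) (hm : m ≤ 1) :
    |logb b p - logb b m| ≤ logb b a⁻¹ := by
  have hp : 0 < p := ha.trans_le hap
  rw [abs_sub_comm, abs_of_nonneg (sub_nonneg.2 (logb_le_logb_of_le hb hp hpm)), logb_inv]
  linarith [logb_le_logb_of_le hb ha hap, logb_nonpos hb (hp.le.trans hpm) hm]

theorem stmt_12 (n : ℕ) (hn : 6 ≤ n) (p m : ℝ)
    (hp : 3 / n ≤ p) (hpm : p ≤ m) (hm : m ≤ 1) :
    |-(2 / n) * Real.logb 2 m + p * Real.logb 2 p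
      - (p - 2 / n) * Real.logb 2 (p - 2 / n)| ≤ 2 * Real.logb 2 n / n + 4.8 / n := by
  have hn0 : (0 : ℝ) < n := Nat.cast_pos.2 (by omega)
  have hinv : (0 : ℝ) < (n : ℝ)⁻¹ := inv_pos.2 hn0
  set c : ℝ := 2 / n with hc
  have hc0 : 0 ≤ c := by positivity
  have hpc : (n : ℝ)⁻¹ ≤ p - c := by
    rw [hc, ← one_div]; linarith [show (3 : ℝ) / n = 1 / n + 2 / n by ring]
  have hlog2 : c / log 2 ≤ 4.8 / n := by
    rw [hc, div_right_comm, div_le_div_iff_of_pos_right hn0, div_le_iff₀ (log_pos one_lt_two)]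
    linarith [log_two_gt_d9]
  calc |-c * logb 2 m + p * logb 2 p - (p - c) * logb 2 (p - c)|
      = |c * (logb 2 p - logb 2 m) + (p - c) * (logb 2 p - logb 2 (p - c))| := by congr 1; ring
    _ ≤ |c * (logb 2 p - logb 2 m)| + |(p - c) * (logb 2 p - logb 2 (p - c))| := abs_add_le _ _
    _ ≤ c * logb 2 n + c / log 2 := by
      gcongr
      · rw [abs_mul, abs_of_nonneg hc0, ← inv_inv (n : ℝ)]
        gcongr
        exact abs_logb_sub_logb_le_logb_inv one_lt_two hinv (hpc.trans (by linarith)) hpm hm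
      · simpa using abs_mul_logb_sub_logb_le one_lt_two (hinv.trans_le hpc) (sub_le_self p hc0)
    _ ≤ 2 * logb 2 n / n + 4.8 / n := by rw [hc, div_mul_eq_mul_div]; gcongr
end
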